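/- arXiv:2605.21128 — 5 statements merged into one kernel-verified Lean document; each statement's English description precedes it below -/
import Mathlib

section
/- Let A be a C*-algebra and ρ : A → M(A) a faithful non-degenerate *-homomorphism into the multiplier algebra. If a ∈ M(A) satisfies ρ(a) ∈ A (where ρ denotes the strictly continuous extension to M(A)), then a ∈ A. -/
/-!
For `e ∈ A` the multiplier `ρ(a e) = ρ̄(a) ρ(e) = b ρ(e)` lies in `A`. Non-degeneracy makes
`ρ(eₙ)` an approximate unit for `A` whenever `eₙ` is one, so `ρ(a eₙ) = b ρ(eₙ) → b`.
As `ρ` is an isometry, its range is closed, hence `b = ρ(c)` and `a eₙ → c`, which forces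
`a = c`.
-/

open scoped MultiplierAlgebra CStarAlgebra
open Filter Topology

namespace CStarRing

variable {A : Type*} [NonUnitalNormedRing A] [StarRing A] [CStarRing A]

lemma eq_of_forall_mul_left_eq {u v : A} (h : ∀ d, d * u = d * v) : u = v := by
  have : star (u - v) * (u - v) = 0 := by rw [mul_sub, h, sub_self]
  exact sub_eq_zero.mp (star_mul_self_eq_zero_iff _ |>.mp this)

lemma eq_of_forall_mul_right_eq {u v : A} (h : ∀ d, u * d = v * d) : u = v := by
  have : (u - v) * star (u - v) = 0 := by rw [sub_mul, h, sub_self]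
  exact sub_eq_zero.mp (mul_star_self_eq_zero_iff _ |>.mp this)

end CStarRing

namespace DoubleCentralizer

variable {𝕜 A : Type*} [NontriviallyNormedField 𝕜] [NonUnitalNormedRing A] [NormedSpace 𝕜 A]
  [SMulCommClass 𝕜 A A] [IsScalarTower 𝕜 A A]

lemma continuous_fst_apply (x : A) : Continuous fun m : 𝓜(𝕜, A) => m.fst x :=
  (continuous_fst.comp isUniformEmbedding_toProdMulOpposite.uniformContinuous.continuous).clm_apply
    continuous_const

variable [StarRing A] [CStarRing A]

lemma fst_mul (m : 𝓜(𝕜, A)) (x y : A) : m.fst (x * y) = m.fst x * y :=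
  CStarRing.eq_of_forall_mul_left_eq fun d => by
    rw [← m.central, ← mul_assoc, m.central, mul_assoc]

lemma snd_mul (m : 𝓜(𝕜, A)) (x y : A) : m.snd (x * y) = x * m.snd y :=
  CStarRing.eq_of_forall_mul_right_eq fun d => by
    rw [m.central, mul_assoc, ← m.central, mul_assoc]

lemma mul_coe (m : 𝓜(𝕜, A)) (x : A) : m * (x : 𝓜(𝕜, A)) = (m.fst x : A) := by
  ext y : 3
  · exact fst_mul m x y
  · exact m.central y x

lemma coe_mul (x : A) (m : 𝓜(𝕜, A)) : (x : 𝓜(𝕜, A)) * m = (m.snd x : A) := by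
  ext y : 3
  · exact (m.central x y).symm
  · exact snd_mul m y x

lemma eq_coe_of_tendsto_fst {l : Filter A} (hl : l.IsApproximateUnit) {m : 𝓜(𝕜, A)} {c : A}
    (hm : Tendsto (fun e => m.fst e) l (𝓝 c)) : m = (c : 𝓜(𝕜, A)) := by
  have := hl.neBot
  ext x : 3
  · have h : Tendsto (fun e => m.fst (e * x)) l (𝓝 (m.fst x)) :=
      (m.fst.continuous.tendsto x).comp (hl.tendsto_mul_right x)
    simp only [fst_mul] at h
    exact tendsto_nhds_unique h (hm.mul_const x)
  · have h : Tendsto (fun e => x * m.fst e) l (𝓝 (x * c)) := hm.const_mul x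
    simp only [← m.central] at h
    exact tendsto_nhds_unique (hl.tendsto_mul_left (m.snd x)) h

end DoubleCentralizer

lemma tendsto_apply_of_eventually_norm_le_of_dense {ι 𝕜 E F : Type*} [NontriviallyNormedField 𝕜]
    [NormedAddCommGroup E] [NormedSpace 𝕜 E] [NormedAddCommGroup F] [NormedSpace 𝕜 F]
    {l : Filter ι} {T : ι → E →L[𝕜] F} {C : ℝ} (hT : ∀ᶠ i in l, ‖T i‖ ≤ C)
    {g : E → F} (hg : Continuous g) {s : Set E} (hs : Dense s)
    (h : ∀ x ∈ s, Tendsto (fun i => T i x) l (𝓝 (g x))) (x : E) :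
    Tendsto (fun i => T i x) l (𝓝 (g x)) := by
  -- on the indices where the bound holds the family is equicontinuous
  let T' : {i // ‖T i‖ ≤ C} → E →L[𝕜] F := fun i => T i
  have hequi : Equicontinuous ((↑) ∘ T') :=
    ((NormedSpace.equicontinuous_TFAE T').out 5 1 (a := ∃ C, ∀ i, ‖T' i‖ ≤ C)).mp
      ⟨C, fun i => i.2⟩
  have hmap : map (↑) (comap (↑) l : Filter {i // ‖T i‖ ≤ C}) = l :=
    map_comap_of_mem (by rwa [Subtype.range_coe_subtype])
  have hclosed := hequi.isClosed_setOfPred_tendsto (l := comap (↑) l) hg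
  suffices x ∈ {x | Tendsto (fun i => T' i x) (comap (↑) l) (𝓝 (g x))} by
    rwa [← hmap, tendsto_map'_iff]
  refine closure_minimal (fun y hy => ?_) hclosed (hs x)
  change Tendsto ((fun i => T i y) ∘ Subtype.val) _ _
  rw [← tendsto_map'_iff, hmap]
  exact h y hy

namespace NonUnitalStarAlgHom

variable {A B : Type*} [NonUnitalCStarAlgebra A] [NonUnitalCStarAlgebra B]

def IsNondegenerate (ρ : B →⋆ₙₐ[ℂ] 𝓜(ℂ, A)) : Prop :=
  Dense ((Submodule.span ℂ {y : A | ∃ b c, y = (ρ b).fst c}) : Set A)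

variable [PartialOrder B] {l : Filter B} {ρ : B →⋆ₙₐ[ℂ] 𝓜(ℂ, A)}

lemma IsNondegenerate.tendsto_fst_apply (hρ : ρ.IsNondegenerate)
    (hl : l.IsIncreasingApproximateUnit) (x : A) :
    Tendsto (fun e => (ρ e).fst x) l (𝓝 x) := by
  have hbound : ∀ᶠ e in l, ‖(ρ e).fst‖ ≤ 1 := hl.eventually_norm.mono fun e he => by
    rw [DoubleCentralizer.norm_fst]
    exact (norm_apply_le ρ e).trans he
  refine tendsto_apply_of_eventually_norm_le_of_dense hbound continuous_id hρ (fun y hy => ?_) x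
  induction hy using Submodule.span_induction with
  | mem y hy =>
    obtain ⟨b, c, rfl⟩ := hy
    have h := ((DoubleCentralizer.continuous_fst_apply c).comp (map_continuous ρ)).tendsto b
    refine (h.comp (hl.tendsto_mul_right b)).congr fun e => ?_
    simp [DoubleCentralizer.mul_fst]
  | zero => simpa using tendsto_const_nhds
  | add y z _ _ hy hz => simpa using hy.add hz
  | smul c y _ hy => simpa using hy.const_smul c

lemma IsNondegenerate.tendsto_snd_apply [StarOrderedRing B] (hρ : ρ.IsNondegenerate)
    (hl : l.IsIncreasingApproximateUnit) (x : A) :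
    Tendsto (fun e => (ρ e).snd x) l (𝓝 x) := by
  have h := (continuous_star.tendsto _).comp (hρ.tendsto_fst_apply hl (star x))
  rw [star_star] at h
  refine h.congr' (hl.eventually_star_eq.mono fun e he => ?_)
  simp [← DoubleCentralizer.star_snd, ← map_star, he]

end NonUnitalStarAlgHom

theorem mem_base_of_strict_extension_mem_base_general
    {A : Type*} [NonUnitalCStarAlgebra A]
    (ρ : A →⋆ₙₐ[ℂ] 𝓜(ℂ, A))
    (hfaithful : Function.Injective ρ)
    (hnondeg : Dense ((Submodule.span ℂ {y : A | ∃ b c : A, y = (ρ b).fst c}) : Set A))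
    (ρbar : 𝓜(ℂ, A) →⋆ₙₐ[ℂ] 𝓜(ℂ, A))
    (hext : ∀ a : A, ρbar (a : 𝓜(ℂ, A)) = ρ a)
    (a : 𝓜(ℂ, A)) (ha : ∃ b : A, ρbar a = (b : 𝓜(ℂ, A))) :
    ∃ c : A, a = (c : 𝓜(ℂ, A)) := by
  obtain ⟨b, hb⟩ := ha
  let := CStarAlgebra.spectralOrder A
  have := CStarAlgebra.spectralOrderedRing A
  have hl := CStarAlgebra.increasingApproximateUnit A
  have hmul (e : A) : ρ (a.fst e) = ((ρ e).snd b : A) := by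
    rw [← hext, ← DoubleCentralizer.mul_coe, map_mul, hb, hext, DoubleCentralizer.coe_mul]
  have hlim : Tendsto (fun e => ρ (a.fst e)) (CStarAlgebra.approximateUnit A)
      (𝓝 (b : 𝓜(ℂ, A))) := by
    simp only [hmul]
    exact ((map_continuous (DoubleCentralizer.coeHom (𝕜 := ℂ) (A := A))).tendsto b).comp
      (NonUnitalStarAlgHom.IsNondegenerate.tendsto_snd_apply hnondeg hl b)
  have hρ := NonUnitalStarAlgHom.isometry ρ hfaithful
  obtain ⟨c, hc⟩ : (b : 𝓜(ℂ, A)) ∈ Set.range ρ :=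
    hρ.isClosedEmbedding.isClosed_range.mem_of_tendsto hlim (.of_forall fun e => ⟨_, rfl⟩)
  rw [← hc, ← Function.comp_def, ← hρ.isEmbedding.tendsto_nhds_iff] at hlim
  exact ⟨c, DoubleCentralizer.eq_coe_of_tendsto_fst hl.toIsApproximateUnit hlim⟩

/-- **Lemma (position in the multiplier algebra).**
Let `A` be a C*-algebra and `ρ : A → M(A)` a faithful non-degenerate *-homomorphism
into the multiplier algebra, with strictly continuous extension `ρbar : M(A) → M(A)`.
If `a ∈ M(A)` satisfies `ρbar a ∈ A`, then `a ∈ A`. -/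
theorem mem_base_of_strict_extension_mem_base
    {A : Type*} [NonUnitalCStarAlgebra A]
    (ρ : A →⋆ₙₐ[ℂ] 𝓜(ℂ, A))
    (hfaithful : Function.Injective ρ)
    (hnondeg : Dense ((Submodule.span ℂ {y : A | ∃ b c : A, y = (ρ b).fst c}) : Set A))
    (ρbar : 𝓜(ℂ, A) →⋆ₙₐ[ℂ] 𝓜(ℂ, A))
    (hext : ∀ a : A, ρbar (a : 𝓜(ℂ, A)) = ρ a)
    (hstrict : ∀ (x : ℕ → 𝓜(ℂ, A)) (y : 𝓜(ℂ, A)),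
      (∀ a : A, Tendsto (fun n => (x n).fst a) atTop (𝓝 (y.fst a)) ∧
        Tendsto (fun n => (x n).snd a) atTop (𝓝 (y.snd a))) →
      (∀ a : A, Tendsto (fun n => (ρbar (x n)).fst a) atTop (𝓝 ((ρbar y).fst a)) ∧
        Tendsto (fun n => (ρbar (x n)).snd a) atTop (𝓝 ((ρbar y).snd a))))
    (a : 𝓜(ℂ, A)) (ha : ∃ b : A, ρbar a = (b : 𝓜(ℂ, A))) :
    ∃ c : A, a = (c : 𝓜(ℂ, A)) :=
  mem_base_of_strict_extension_mem_base_general ρ hfaithful hnondeg ρbar hext a ha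
end

section
/- Let B₁, …, Bₙ be C*-subalgebras of a C*-algebra A with Bᵢ · Bⱼ ⊆ B_{max{i,j}} for all i, j, and with B₁ + B₂ + ⋯ + Bₙ = A. Then for any positive element a ∈ A there exist bᵢ ∈ Bᵢ (i = 1, …, n) with a = b₁ + ⋯ + bₙ and such that b₁ + ⋯ + b_k ≥ 0 for every 1 ≤ k ≤ n. -/
open scoped ComplexOrder

/-!
Write the positive element as `a = x⋆x` and split `x = c₁ + ⋯ + cₙ` with `cᵢ ∈ Bᵢ`. With the
prefix sums `Pₖ = c₁ + ⋯ + cₖ`, take `bₖ = Pₖ⋆Pₖ - Pₖ₋₁⋆Pₖ₋₁`: the partial sums of the `bₖ`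
telescope to the positive elements `Pₖ⋆Pₖ`, and `bₖ = Pₖ₋₁⋆cₖ + cₖ⋆Pₖ` is a sum of products of
an element of `Bₖ` with elements of `B₁, …, Bₖ`, hence lies in `Bₖ` by the filtration.
-/

open Finset

section Filtered

variable {ι S A : Type*} [LinearOrder ι] [NonUnitalNonAssocSemiring A] [SetLike S A]
  [AddSubmonoidClass S A] {B : ι → S}

theorem sum_mul_mem_of_le (hB : ∀ i j, ∀ x ∈ B i, ∀ y ∈ B j, x * y ∈ B (max i j))
    {s : Finset ι} {c : ι → A} {j : ι} {y : A} (hc : ∀ i ∈ s, c i ∈ B i)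
    (hs : ∀ i ∈ s, i ≤ j) (hy : y ∈ B j) : (∑ i ∈ s, c i) * y ∈ B j := by
  rw [sum_mul]
  refine sum_mem fun i hi => ?_
  simpa [max_eq_right (hs i hi)] using hB i j _ (hc i hi) y hy

theorem mul_sum_mem_of_le (hB : ∀ i j, ∀ x ∈ B i, ∀ y ∈ B j, x * y ∈ B (max i j))
    {s : Finset ι} {c : ι → A} {j : ι} {y : A} (hc : ∀ i ∈ s, c i ∈ B i)
    (hs : ∀ i ∈ s, i ≤ j) (hy : y ∈ B j) : y * ∑ i ∈ s, c i ∈ B j := by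
  rw [mul_sum]
  refine sum_mem fun i hi => ?_
  simpa [max_eq_left (hs i hi)] using hB j i y hy _ (hc i hi)

end Filtered

namespace Fin

variable {n : ℕ}

/-- Indexed by `m : ℕ` rather than `Fin n` so that the empty prefix (`m = 0`) and the whole sum
(`m = n`) are both prefix sums. -/
def prefixSum {M : Type*} [AddCommMonoid M] (c : Fin n → M) (m : ℕ) : M :=
  ∑ i ∈ univ.filter (fun i : Fin n => (i : ℕ) < m), c i

section prefixSum

variable {M : Type*} [AddCommMonoid M] (c : Fin n → M)

@[simp]
theorem prefixSum_zero : prefixSum c 0 = 0 := by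
  simp [prefixSum]

theorem prefixSum_succ (k : Fin n) : prefixSum c (k + 1) = prefixSum c k + c k := by
  have : univ.filter (fun i : Fin n => (i : ℕ) < k + 1) =
      insert k (univ.filter fun i : Fin n => (i : ℕ) < k) := by
    ext i
    simp only [mem_filter, mem_univ, true_and, mem_insert, Fin.ext_iff]
    omega
  rw [prefixSum, this, sum_insert (by simp), add_comm, prefixSum]

theorem prefixSum_self : prefixSum c n = ∑ i, c i := by
  simp [prefixSum]

theorem sum_filter_le_eq_sum_range (f : ℕ → M) (k : Fin n) :
    ∑ i with i ≤ k, f i = ∑ i ∈ range (k + 1), f i := by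
  have : range (k + 1) = (univ.filter (· ≤ k)).map valEmbedding := by
    ext j
    simp only [mem_map, mem_filter, mem_univ, true_and, valEmbedding_apply, mem_range]
    constructor
    · intro hj
      exact ⟨⟨j, by omega⟩, Fin.le_def.2 (Nat.le_of_lt_succ hj), rfl⟩
    · rintro ⟨i, hik, rfl⟩
      exact Nat.lt_succ_of_le hik
  rw [this, sum_map]
  rfl

end prefixSum

section Telescope

variable {G : Type*} [AddCommGroup G] (g : ℕ → G)

theorem sum_filter_le_sub (k : Fin n) :
    ∑ i with i ≤ k, (g (i + 1) - g i) = g (k + 1) - g 0 := by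
  rw [sum_filter_le_eq_sum_range (fun m => g (m + 1) - g m), sum_range_sub]

theorem sum_univ_sub : ∑ i : Fin n, (g (i + 1) - g i) = g n - g 0 := by
  rw [sum_univ_eq_sum_range (fun m => g (m + 1) - g m), sum_range_sub]

end Telescope

end Fin

open Fin

section StarMulSelf

variable {S A : Type*} [NonUnitalRing A] [StarRing A] [SetLike S A] [AddSubmonoidClass S A]
  [StarMemClass S A] {n : ℕ} {B : Fin n → S} {c : Fin n → A}

theorem star_prefixSum_mul_self_succ_sub_mem
    (hB : ∀ i j, ∀ x ∈ B i, ∀ y ∈ B j, x * y ∈ B (max i j)) (hc : ∀ i, c i ∈ B i) (k : Fin n) :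
    star (prefixSum c (k + 1)) * prefixSum c (k + 1) - star (prefixSum c k) * prefixSum c k
      ∈ B k := by
  have hsplit : star (prefixSum c (k + 1)) * prefixSum c (k + 1)
      - star (prefixSum c k) * prefixSum c k
      = star (prefixSum c k) * c k + star (c k) * prefixSum c (k + 1) := by
    rw [prefixSum_succ, star_add]
    noncomm_ring
  rw [hsplit, prefixSum, prefixSum, star_sum]
  refine add_mem (sum_mul_mem_of_le hB (fun i _ => star_mem (hc i)) ?_ (hc k))
    (mul_sum_mem_of_le hB (fun i _ => hc i) ?_ (star_mem (hc k)))
  · intro i hi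
    exact Fin.le_def.2 (mem_filter.1 hi).2.le
  · intro i hi
    exact Fin.le_def.2 (Nat.le_of_lt_succ (mem_filter.1 hi).2)

theorem exists_filtered_decomposition_star_mul_self [PartialOrder A] [StarOrderedRing A]
    (hB : ∀ i j, ∀ x ∈ B i, ∀ y ∈ B j, x * y ∈ B (max i j)) (hc : ∀ i, c i ∈ B i) :
    ∃ b : Fin n → A, (∀ i, b i ∈ B i) ∧ star (∑ i, c i) * ∑ i, c i = ∑ i, b i ∧
      ∀ k : Fin n, 0 ≤ ∑ i ∈ univ.filter (· ≤ k), b i := by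
  set g : ℕ → A := fun m => star (prefixSum c m) * prefixSum c m
  refine ⟨fun k => g (k + 1) - g k, star_prefixSum_mul_self_succ_sub_mem hB hc, ?_, fun k => ?_⟩
  · simp [sum_univ_sub g, g, prefixSum_self]
  · simp [sum_filter_le_sub g, g, star_mul_self_nonneg]

end StarMulSelf

theorem positive_decomposition_filtered_subalgebras_general
    {A : Type*} [NonUnitalCStarAlgebra A] [PartialOrder A] [StarOrderedRing A] {n : ℕ}
    (B : Fin n → NonUnitalStarSubalgebra ℂ A)
    (hBmul : ∀ i j : Fin n, ∀ x ∈ B i, ∀ y ∈ B j, x * y ∈ B (max i j))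
    (hsum : ∀ a : A, ∃ b : Fin n → A, (∀ i, b i ∈ B i) ∧ a = ∑ i, b i)
    (a : A) (ha : 0 ≤ a) :
    ∃ b : Fin n → A, (∀ i, b i ∈ B i) ∧ a = ∑ i, b i ∧
      ∀ k : Fin n, 0 ≤ ∑ i ∈ Finset.univ.filter (· ≤ k), b i := by
  obtain ⟨x, rfl⟩ := CStarAlgebra.nonneg_iff_eq_star_mul_self.mp ha
  obtain ⟨c, hc, rfl⟩ := hsum x
  exact exists_filtered_decomposition_star_mul_self hBmul hc

/-- **Positive decomposition along a filtered family of C*-subalgebras.**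
Let `B₁, …, Bₙ` be C*-subalgebras of a C*-algebra `A` with `Bᵢ · Bⱼ ⊆ B_{max{i,j}}`
for all `i, j`, and with `B₁ + ⋯ + Bₙ = A`.  Then for any positive element `a ∈ A`
there exist `bᵢ ∈ Bᵢ` with `a = b₁ + ⋯ + bₙ` and all partial sums `b₁ + ⋯ + b_k`
positive. -/
theorem positive_decomposition_filtered_subalgebras
    {A : Type*} [NonUnitalCStarAlgebra A] [PartialOrder A] [StarOrderedRing A] {n : ℕ}
    (B : Fin n → NonUnitalStarSubalgebra ℂ A)
    (hBclosed : ∀ i, IsClosed (B i : Set A))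
    (hBmul : ∀ i j : Fin n, ∀ x ∈ B i, ∀ y ∈ B j, x * y ∈ B (max i j))
    (hsum : ∀ a : A, ∃ b : Fin n → A, (∀ i, b i ∈ B i) ∧ a = ∑ i, b i)
    (a : A) (ha : 0 ≤ a) :
    ∃ b : Fin n → A, (∀ i, b i ∈ B i) ∧ a = ∑ i, b i ∧
      ∀ k : Fin n, 0 ≤ ∑ i ∈ Finset.univ.filter (· ≤ k), b i :=
  positive_decomposition_filtered_subalgebras_general B hBmul hsum a ha
end

section
/- Let B ⊆ Ped(A) be a dense *-subalgebra of a C*-algebra A contained in the Pedersen ideal. If two tracial weights τ, ω on A satisfy τ|_B = ω|_B, then τ = ω. -/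
open scoped ENNReal NNReal ComplexOrder

/-- A (densely defined, lower semicontinuous) tracial weight on a C*-algebra. -/
structure TracialWeight (A : Type*) [NonUnitalCStarAlgebra A]
    [PartialOrder A] [StarOrderedRing A] where
  toFun : A → ℝ≥0∞
  map_add : ∀ x y : A, 0 ≤ x → 0 ≤ y → toFun (x + y) = toFun x + toFun y
  map_smul : ∀ (r : ℝ≥0) (x : A), 0 ≤ x → toFun (((r : ℝ) : ℂ) • x) = (r : ℝ≥0∞) * toFun x
  lsc : LowerSemicontinuous toFun
  tracial : ∀ x : A, toFun (star x * x) = toFun (x * star x)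
  densely_defined : Dense ((Submodule.span ℂ {x : A | 0 ≤ x ∧ toFun x < ⊤}) : Set A)

/-- `P` is the Pedersen ideal of `A`: the minimal dense (algebraic two-sided) ideal. -/
def IsPedersenIdeal {A : Type*} [NonUnitalCStarAlgebra A] (P : Submodule ℂ A) : Prop :=
  Dense (P : Set A) ∧ (∀ a : A, ∀ x ∈ P, a * x ∈ P ∧ x * a ∈ P) ∧
    ∀ Q : Submodule ℂ A, Dense (Q : Set A) →
      (∀ a : A, ∀ x ∈ Q, a * x ∈ Q ∧ x * a ∈ Q) → P ≤ Q

/-!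
Both weights are finite on `Ped(A)`: the span of `{x ≥ 0 | τ x < ∞}` is a dense two-sided ideal
(by the trace property and polarization), hence contains `Ped(A)`, and a positive element of
that span is dominated by a positive combination of its generators. For `b ∈ B` the maps
`x ↦ τ (b⋆ x b)` and `x ↦ ω (b⋆ x b)` are then Lipschitz on `A₊` with constants `τ (b⋆ b)`,
`ω (b⋆ b)` and agree on `{v⋆ v | v ∈ B}`, which is dense in `A₊`. Finally `x ≥ 0` is a limit of
`c⋆ x c` with `c ∈ B`, `‖c‖ ≤ 1` (perturb an approximate unit into `B`), so lower
semicontinuity of `τ` gives `τ x ≤ sup τ (c⋆ x c) = sup ω (c⋆ x c) ≤ ω x`.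
-/

open Filter Topology Metric ComplexStarModule

lemma mem_span_real_of_isSelfAdjoint {A : Type*} [AddCommGroup A] [Module ℂ A]
    [StarAddMonoid A] [StarModule ℂ A] {S : Set A} (hS : ∀ s ∈ S, IsSelfAdjoint s) {x : A}
    (hx : x ∈ Submodule.span ℂ S) (hx_sa : IsSelfAdjoint x) : x ∈ Submodule.span ℝ S := by
  suffices ∀ z ∈ Submodule.span ℂ S,
      (ℜ z : A) ∈ Submodule.span ℝ S ∧ (ℑ z : A) ∈ Submodule.span ℝ S by
    simpa only [hx_sa.coe_realPart] using (this x hx).1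
  intro z hz
  induction hz using Submodule.span_induction with
  | mem s hs =>
    rw [(hS s hs).coe_realPart, (hS s hs).imaginaryPart]
    exact ⟨Submodule.subset_span hs, Submodule.zero_mem _⟩
  | zero => simp
  | add y z _ _ hy hz => simpa using ⟨add_mem hy.1 hz.1, add_mem hy.2 hz.2⟩
  | smul c z _ hz =>
    rw [realPart_smul, imaginaryPart_smul]
    simpa using ⟨sub_mem (Submodule.smul_mem _ c.re hz.1) (Submodule.smul_mem _ c.im hz.2),
      add_mem (Submodule.smul_mem _ c.re hz.2) (Submodule.smul_mem _ c.im hz.1)⟩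

lemma LowerSemicontinuous.le_of_mem_closure {α γ : Type*} [TopologicalSpace α] [LinearOrder γ]
    [TopologicalSpace γ] [ClosedIicTopology γ] {f : α → γ} (hf : LowerSemicontinuous f)
    {s : Set α} {x : α} (hx : x ∈ closure s) {a : γ} (h : ∀ y ∈ s, f y ≤ a) : f x ≤ a :=
  (hf.isClosed_preimage a).closure_subset_iff.2 h hx

section CStarAlgebra

variable {A : Type*} [NonUnitalCStarAlgebra A] [PartialOrder A] [StarOrderedRing A]

lemma tendsto_star_mul_mul_approximateUnit (x : A) :
    Tendsto (fun e => star e * x * e) (CStarAlgebra.approximateUnit A) (𝓝 x) := by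
  have hl := CStarAlgebra.increasingApproximateUnit A
  have hbdd : IsBoundedUnder (· ≤ ·) (CStarAlgebra.approximateUnit A) (‖·‖) :=
    isBoundedUnder_of_eventually_le hl.eventually_norm
  have hleft : Tendsto (fun e => (e * x - x) * e) (CStarAlgebra.approximateUnit A) (𝓝 0) :=
    (tendsto_sub_nhds_zero_iff.2 (hl.tendsto_mul_right x)).zero_mul_isBoundedUnder_le hbdd
  have hright := tendsto_sub_nhds_zero_iff.2 (hl.tendsto_mul_left x)
  rw [← tendsto_sub_nhds_zero_iff]
  refine ((add_zero (0 : A)) ▸ hleft.add hright).congr' ?_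
  filter_upwards [hl.eventually_star_eq] with e he
  rw [he]
  noncomm_ring

lemma mem_closure_image_star_mul_self {s : Set A} (hs : Dense s) {x : A} (hx : 0 ≤ x) :
    x ∈ closure ((fun v => star v * v) '' s) := by
  obtain ⟨y, rfl⟩ := CStarAlgebra.nonneg_iff_eq_star_mul_self.mp hx
  exact image_closure_subset_closure_image (continuous_star.mul continuous_id)
    ⟨y, hs.closure_eq ▸ Set.mem_univ y, rfl⟩

lemma mem_closure_image_star_conj {s : Set A} (hs : Dense s) (x : A) :
    x ∈ closure ((fun c => star c * x * c) '' (s ∩ closedBall 0 1)) := by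
  have hball : closedBall (0 : A) 1 ⊆ closure (s ∩ closedBall 0 1) :=
    calc closedBall (0 : A) 1 = closure (ball 0 1) := (closure_ball 0 one_ne_zero).symm
      _ ⊆ closure (closure (ball 0 1 ∩ s)) :=
          closure_mono (hs.open_subset_closure_inter isOpen_ball)
      _ ⊆ closure (s ∩ closedBall 0 1) :=
          closure_closure.trans_subset <|
            closure_mono fun c hc => ⟨hc.2, ball_subset_closedBall hc.1⟩
  have hx : x ∈ closure ((fun c => star c * x * c) '' closedBall 0 1) :=
    mem_closure_of_tendsto (tendsto_star_mul_mul_approximateUnit x)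
      (mem_of_superset (CStarAlgebra.increasingApproximateUnit A).closedBall_mem
        fun c hc => Set.mem_image_of_mem _ hc)
  have hcont : Continuous fun c : A => star c * x * c := by fun_prop
  exact closure_minimal ((Set.image_mono hball).trans (image_closure_subset_closure_image hcont))
    isClosed_closure hx

end CStarAlgebra

namespace TracialWeight

variable {A : Type*} [NonUnitalCStarAlgebra A] [PartialOrder A] [StarOrderedRing A]
  (τ : TracialWeight A)

lemma map_smul_real {r : ℝ} (hr : 0 ≤ r) {x : A} (hx : 0 ≤ x) :
    τ.toFun (r • x) = ENNReal.ofReal r * τ.toFun x := by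
  have h := τ.map_smul r.toNNReal x hx
  rwa [Real.coe_toNNReal r hr, Complex.coe_smul] at h

lemma map_zero : τ.toFun 0 = 0 := by
  simpa using τ.map_smul 0 0 le_rfl

lemma mono {x y : A} (hx : 0 ≤ x) (hxy : x ≤ y) : τ.toFun x ≤ τ.toFun y :=
  calc τ.toFun x ≤ τ.toFun x + τ.toFun (y - x) := le_self_add
    _ = τ.toFun y := by rw [← τ.map_add _ _ hx (sub_nonneg.2 hxy), add_sub_cancel]

lemma map_star_conj_le (c : A) {x : A} (hx : 0 ≤ x) :
    τ.toFun (star c * x * c) ≤ ENNReal.ofReal (‖c‖ ^ 2) * τ.toFun x := by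
  obtain ⟨y, rfl⟩ := CStarAlgebra.nonneg_iff_eq_star_mul_self.mp hx
  calc τ.toFun (star c * (star y * y) * c)
      = τ.toFun (star (star y) * (c * star c) * star y) := by
        rw [show star c * (star y * y) * c = star (y * c) * (y * c) by simp [star_mul, mul_assoc],
          τ.tracial]
        simp only [star_mul, star_star, mul_assoc]
    _ ≤ τ.toFun (‖c * star c‖ • (star (star y) * star y)) :=
        τ.mono (star_left_conjugate_nonneg (mul_star_self_nonneg c) _)
          (CStarAlgebra.star_left_conjugate_le_norm_smul)
    _ = ENNReal.ofReal (‖c‖ ^ 2) * τ.toFun (star y * y) := by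
        rw [τ.map_smul_real (norm_nonneg _) (star_mul_self_nonneg _),
          CStarRing.norm_self_mul_star, ← sq, star_star, ← τ.tracial]

lemma map_star_conj_le_add (b : A) {x₁ x₂ : A} (h₁ : 0 ≤ x₁) (h₂ : 0 ≤ x₂) :
    τ.toFun (star b * x₁ * b) ≤
      τ.toFun (star b * x₂ * b) + ENNReal.ofReal ‖x₁ - x₂‖ * τ.toFun (star b * b) := by
  have hle : star b * x₁ * b ≤ star b * x₂ * b + ‖x₁ - x₂‖ • (star b * b) := by
    rw [← sub_le_iff_le_add', ← mul_sub_right_distrib, ← mul_sub_left_distrib]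
    exact CStarAlgebra.star_left_conjugate_le_norm_smul (h₁.isSelfAdjoint.sub h₂.isSelfAdjoint)
  refine (τ.mono (star_left_conjugate_nonneg h₁ b) hle).trans_eq ?_
  rw [τ.map_add _ _ (star_left_conjugate_nonneg h₂ b)
      (smul_nonneg (norm_nonneg _) (star_mul_self_nonneg b)),
    τ.map_smul_real (norm_nonneg _) (star_mul_self_nonneg b)]

def finiteSpan : Submodule ℂ A :=
  Submodule.span ℂ {x | 0 ≤ x ∧ τ.toFun x < ⊤}

lemma exists_le_of_mem_span_real {x : A}
    (hx : x ∈ Submodule.span ℝ {y : A | 0 ≤ y ∧ τ.toFun y < ⊤}) :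
    ∃ p, 0 ≤ p ∧ τ.toFun p < ⊤ ∧ x ≤ p := by
  suffices ∃ p, 0 ≤ p ∧ τ.toFun p < ⊤ ∧ x ≤ p ∧ -x ≤ p by
    obtain ⟨p, hp₀, hp, hxp, -⟩ := this
    exact ⟨p, hp₀, hp, hxp⟩
  induction hx using Submodule.span_induction with
  | mem y hy => exact ⟨y, hy.1, hy.2, le_rfl, (neg_nonpos.2 hy.1).trans hy.1⟩
  | zero => exact ⟨0, le_rfl, by simp [τ.map_zero], by simp, by simp⟩
  | add y z _ _ hy hz =>
    obtain ⟨p, hp₀, hp, hyp, hyp'⟩ := hy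
    obtain ⟨q, hq₀, hq, hzq, hzq'⟩ := hz
    refine ⟨p + q, add_nonneg hp₀ hq₀, ?_, add_le_add hyp hzq, ?_⟩
    · rw [τ.map_add _ _ hp₀ hq₀]
      exact ENNReal.add_lt_top.2 ⟨hp, hq⟩
    · rw [neg_add]
      exact add_le_add hyp' hzq'
  | smul r y _ hy =>
    obtain ⟨p, hp₀, hp, hyp, hyp'⟩ := hy
    refine ⟨|r| • p, smul_nonneg (abs_nonneg r) hp₀, ?_, ?_⟩
    · rw [τ.map_smul_real (abs_nonneg r) hp₀]
      exact ENNReal.mul_lt_top ENNReal.ofReal_lt_top hp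
    rcases le_total 0 r with hr | hr
    · rw [abs_of_nonneg hr, ← smul_neg]
      exact ⟨smul_le_smul_of_nonneg_left hyp hr, smul_le_smul_of_nonneg_left hyp' hr⟩
    · rw [abs_of_nonpos hr, ← neg_smul_neg, ← smul_neg, neg_neg]
      exact ⟨smul_le_smul_of_nonneg_left hyp' (neg_nonneg.2 hr),
        smul_le_smul_of_nonneg_left hyp (neg_nonneg.2 hr)⟩

lemma lt_top_of_mem_finiteSpan {x : A} (hx : x ∈ τ.finiteSpan) (hx₀ : 0 ≤ x) :
    τ.toFun x < ⊤ := by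
  obtain ⟨p, -, hp, hxp⟩ := τ.exists_le_of_mem_span_real <|
    mem_span_real_of_isSelfAdjoint (fun _ hs => hs.1.isSelfAdjoint) hx hx₀.isSelfAdjoint
  exact (τ.mono hx₀ hxp).trans_lt hp

lemma star_mul_self_add_lt_top {u v : A} (hu : τ.toFun (star u * u) < ⊤)
    (hv : τ.toFun (star v * v) < ⊤) : τ.toFun (star (u + v) * (u + v)) < ⊤ := by
  have hle : star (u + v) * (u + v) ≤ (2 : ℝ) • (star u * u + star v * v) := by
    have : (2 : ℝ) • (star u * u + star v * v) - star (u + v) * (u + v) =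
        star (u - v) * (u - v) := by
      simp only [star_add, star_sub, two_smul]
      noncomm_ring
    exact sub_nonneg.1 (this ▸ star_mul_self_nonneg _)
  refine (τ.mono (star_mul_self_nonneg _) hle).trans_lt ?_
  rw [τ.map_smul_real zero_le_two (add_nonneg (star_mul_self_nonneg u) (star_mul_self_nonneg v)),
    τ.map_add _ _ (star_mul_self_nonneg u) (star_mul_self_nonneg v)]
  exact ENNReal.mul_lt_top ENNReal.ofReal_lt_top (ENNReal.add_lt_top.2 ⟨hu, hv⟩)

lemma star_mul_self_smul_lt_top (c : ℂ) {v : A} (hv : τ.toFun (star v * v) < ⊤) :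
    τ.toFun (star (c • v) * (c • v)) < ⊤ := by
  have : star (c • v) * (c • v) = (‖c‖ ^ 2) • (star v * v) := by
    rw [star_smul, smul_mul_smul_comm, ← Complex.coe_smul, Complex.ofReal_pow,
      ← Complex.conj_mul']
    rfl
  rw [this, τ.map_smul_real (sq_nonneg _) (star_mul_self_nonneg v)]
  exact ENNReal.mul_lt_top ENNReal.ofReal_lt_top hv

lemma star_mul_mem_finiteSpan {u v : A} (hu : τ.toFun (star u * u) < ⊤)
    (hv : τ.toFun (star v * v) < ⊤) : star v * u ∈ τ.finiteSpan := by
  have polarization : star v * u = (4 : ℂ)⁻¹ • ∑ k ∈ Finset.range 4,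
      Complex.I ^ k • (star (u + Complex.I ^ k • v) * (u + Complex.I ^ k • v)) := by
    simp only [Finset.sum_range_succ, Finset.sum_range_zero, star_add, star_smul, star_pow,
      Complex.star_def, Complex.conj_I, add_mul, mul_add, smul_mul_assoc, mul_smul_comm, smul_add,
      smul_smul, pow_succ, pow_zero, one_mul, neg_mul, mul_neg, Complex.I_mul_I, neg_neg, neg_smul]
    module
  rw [polarization]
  refine Submodule.smul_mem _ _ (Submodule.sum_mem _ fun k _ => Submodule.smul_mem _ _ ?_)
  exact Submodule.subset_span ⟨star_mul_self_nonneg _,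
    τ.star_mul_self_add_lt_top hu (τ.star_mul_self_smul_lt_top _ hv)⟩

lemma star_mul_self_mul_lt_top {u : A} (hu : τ.toFun (star u * u) < ⊤) (a : A) :
    τ.toFun (star (u * a) * (u * a)) < ⊤ := by
  rw [star_mul, mul_assoc, ← mul_assoc (star u), ← mul_assoc]
  exact (τ.map_star_conj_le a (star_mul_self_nonneg u)).trans_lt
    (ENNReal.mul_lt_top ENNReal.ofReal_lt_top hu)

lemma mul_mem_finiteSpan (a : A) {x : A} (hx : x ∈ τ.finiteSpan) :
    a * x ∈ τ.finiteSpan ∧ x * a ∈ τ.finiteSpan := by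
  induction hx using Submodule.span_induction with
  | mem s hs =>
    obtain ⟨y, rfl⟩ := CStarAlgebra.nonneg_iff_eq_star_mul_self.mp hs.1
    have hy : τ.toFun (star y * y) < ⊤ := hs.2
    constructor
    · have := τ.star_mul_mem_finiteSpan hy (τ.star_mul_self_mul_lt_top hy (star a))
      rwa [star_mul, star_star, mul_assoc] at this
    · rw [mul_assoc]
      exact τ.star_mul_mem_finiteSpan (τ.star_mul_self_mul_lt_top hy a) hy
  | zero => simp
  | add y z _ _ hy hz =>
    rw [mul_add, add_mul]
    exact ⟨add_mem hy.1 hz.1, add_mem hy.2 hz.2⟩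
  | smul c y _ hy =>
    rw [mul_smul_comm, smul_mul_assoc]
    exact ⟨Submodule.smul_mem _ c hy.1, Submodule.smul_mem _ c hy.2⟩

lemma lt_top_of_mem_pedersen {P : Submodule ℂ A} (hP : IsPedersenIdeal P) {x : A} (hxP : x ∈ P)
    (hx₀ : 0 ≤ x) : τ.toFun x < ⊤ :=
  τ.lt_top_of_mem_finiteSpan (hP.2.2 _ τ.densely_defined τ.mul_mem_finiteSpan hxP) hx₀

lemma map_star_conj_le_of_agree {τ ω : TracialWeight A}
    {B : NonUnitalStarSubalgebra ℂ A} (hB : Dense (B : Set A))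
    (hagree : ∀ x ∈ B, 0 ≤ x → τ.toFun x = ω.toFun x) {b : A} (hb : b ∈ B)
    (hτb : τ.toFun (star b * b) < ⊤) (hωb : ω.toFun (star b * b) < ⊤) {x : A} (hx : 0 ≤ x) :
    τ.toFun (star b * x * b) ≤ ω.toFun (star b * x * b) := by
  set C := τ.toFun (star b * b) + ω.toFun (star b * b)
  have hC : C ≠ ⊤ := ENNReal.add_ne_top.2 ⟨hτb.ne, hωb.ne⟩
  let bound : A → ℝ≥0∞ := fun x' => ω.toFun (star b * x * b) + ENNReal.ofReal ‖x - x'‖ * C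
  have hbound : Continuous bound :=
    continuous_const.add <| (ENNReal.continuous_mul_const hC).comp <|
      ENNReal.continuous_ofReal.comp (continuous_const.sub continuous_id).norm
  have hle : ∀ x' ∈ (fun v => star v * v) '' (B : Set A), τ.toFun (star b * x * b) ≤ bound x' := by
    rintro _ ⟨v, hv, rfl⟩
    set y := star v * v
    have hy₀ : 0 ≤ y := star_mul_self_nonneg v
    have hyB : star b * y * b ∈ B :=
      mul_mem (mul_mem (star_mem hb) (mul_mem (star_mem hv) hv)) hb
    calc τ.toFun (star b * x * b)
        ≤ τ.toFun (star b * y * b) + ENNReal.ofReal ‖x - y‖ * τ.toFun (star b * b) :=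
          τ.map_star_conj_le_add b hx hy₀
      _ = ω.toFun (star b * y * b) + ENNReal.ofReal ‖x - y‖ * τ.toFun (star b * b) := by
          rw [hagree _ hyB (star_left_conjugate_nonneg hy₀ b)]
      _ ≤ ω.toFun (star b * x * b) + ENNReal.ofReal ‖y - x‖ * ω.toFun (star b * b)
            + ENNReal.ofReal ‖x - y‖ * τ.toFun (star b * b) := by
          gcongr
          exact ω.map_star_conj_le_add b hy₀ hx
      _ = bound y := by
          rw [norm_sub_rev]
          ring
  simpa [bound] using (isClosed_le continuous_const hbound).closure_subset_iff.2 hle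
    (mem_closure_image_star_mul_self hB hx)

lemma le_of_agree_on_dense_subalgebra {P : Submodule ℂ A} (hP : IsPedersenIdeal P)
    (B : NonUnitalStarSubalgebra ℂ A) (hBP : (B : Set A) ⊆ P) (hB : Dense (B : Set A))
    {τ ω : TracialWeight A} (hagree : ∀ x ∈ B, 0 ≤ x → τ.toFun x = ω.toFun x)
    {x : A} (hx : 0 ≤ x) : τ.toFun x ≤ ω.toFun x := by
  refine τ.lsc.le_of_mem_closure (mem_closure_image_star_conj hB x) ?_
  rintro _ ⟨c, ⟨hcB, hc⟩, rfl⟩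
  have hfin (μ : TracialWeight A) : μ.toFun (star c * c) < ⊤ :=
    μ.lt_top_of_mem_pedersen hP (hBP (mul_mem (star_mem hcB) hcB)) (star_mul_self_nonneg c)
  calc τ.toFun (star c * x * c) ≤ ω.toFun (star c * x * c) :=
        map_star_conj_le_of_agree hB hagree hcB (hfin τ) (hfin ω) hx
    _ ≤ ENNReal.ofReal (‖c‖ ^ 2) * ω.toFun x := ω.map_star_conj_le c hx
    _ ≤ ω.toFun x := mul_le_of_le_one_left' <| ENNReal.ofReal_le_one.2 <|
        pow_le_one₀ (norm_nonneg c) (mem_closedBall_zero_iff.1 hc)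

end TracialWeight

/-- **Tracial weights are determined on dense *-subalgebras of the Pedersen ideal.**
Let `B ⊆ Ped(A)` be a dense *-subalgebra of a C*-algebra `A` contained in the Pedersen
ideal.  If two tracial weights `τ, ω` on `A` agree on `B`, then `τ = ω`. -/
theorem tracial_weights_agree_of_agree_on_dense_subalgebra_of_pedersen
    {A : Type*} [NonUnitalCStarAlgebra A] [PartialOrder A] [StarOrderedRing A]
    (P : Submodule ℂ A) (hP : IsPedersenIdeal P)
    (B : NonUnitalStarSubalgebra ℂ A)
    (hBP : (B : Set A) ⊆ (P : Set A)) (hdense : Dense (B : Set A))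
    (τ ω : TracialWeight A)
    (hagree : ∀ x ∈ B, 0 ≤ x → τ.toFun x = ω.toFun x) :
    ∀ x : A, 0 ≤ x → τ.toFun x = ω.toFun x := fun _ hx =>
  le_antisymm (TracialWeight.le_of_agree_on_dense_subalgebra hP B hBP hdense hagree hx)
    (TracialWeight.le_of_agree_on_dense_subalgebra hP B hBP hdense
      (fun y hy hy₀ => (hagree y hy hy₀).symm) hx)
end

section
/- Let S ⊆ ℝ be a closed subsemigroup under addition. If S contains both a strictly positive and a strictly negative element, then S is a closed subgroup of ℝ (hence S = ℝ or S = dℤ for some d > 0). -/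
/-- **Closed subsemigroups of ℝ containing positive and negative elements are subgroups.**
Let `S ⊆ ℝ` be a closed subsemigroup under addition. If `S` contains both a strictly
positive and a strictly negative element, then `S` is a closed subgroup of `ℝ`
(hence `S = ℝ` or `S = dℤ` for some `d > 0`). -/
theorem closed_subsemigroup_with_pos_and_neg_is_subgroup
    (S : Set ℝ) (hclosed : IsClosed S)
    (hadd : ∀ s ∈ S, ∀ t ∈ S, s + t ∈ S)
    (hpos : ∃ s ∈ S, 0 < s) (hneg : ∃ s ∈ S, s < 0) :
    (∃ G : AddSubgroup ℝ, (G : Set ℝ) = S) ∧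
      (S = Set.univ ∨ ∃ d : ℝ, 0 < d ∧ S = (AddSubgroup.zmultiples d : Set ℝ)) := by
  obtain ⟨a, haS, ha⟩ := hpos
  obtain ⟨b, hbS, hb⟩ := hneg
  have hmul : ∀ x ∈ S, ∀ n : ℕ, (n + 1) • x ∈ S := by
    intro x hx n
    induction n with
    | zero => simpa using hx
    | succ n ih => rw [succ_nsmul]; exact hadd _ ih _ hx
  -- Key: S is closed under negation
  have key : ∀ s ∈ S, -s ∈ S := by
    intro s hs
    by_contra hns
    set A := S ∩ Set.Ici (-s) with hA
    set B := S ∩ Set.Iic (-s) with hB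
    have hAne : A.Nonempty := by
      obtain ⟨n, hn⟩ := Archimedean.arch (-s) ha
      refine ⟨(n + 1) • a, hmul a haS n, ?_⟩
      have : n • a ≤ (n + 1) • a := by
        rw [succ_nsmul]; linarith
      exact le_trans hn this
    have hBne : B.Nonempty := by
      obtain ⟨n, hn⟩ := Archimedean.arch s (neg_pos.mpr hb)
      refine ⟨(n + 1) • b, hmul b hbS n, ?_⟩
      have h1 : (n + 1) • b ≤ n • b := by
        rw [succ_nsmul]; linarith
      have h2 : n • b ≤ -s := by
        have := hn
        rw [smul_neg] at this
        linarith
      exact le_trans h1 h2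
    have hAclosed : IsClosed A := hclosed.inter isClosed_Ici
    have hBclosed : IsClosed B := hclosed.inter isClosed_Iic
    have hAbdd : BddBelow A := ⟨-s, fun x hx => hx.2⟩
    have hBbdd : BddAbove B := ⟨-s, fun x hx => hx.2⟩
    set c := sInf A with hc
    set d := sSup B with hd
    have hcA : c ∈ A := hAclosed.csInf_mem hAne hAbdd
    have hdB : d ∈ B := hBclosed.csSup_mem hBne hBbdd
    have hcgt : -s < c := lt_of_le_of_ne hcA.2 (fun h => hns (h ▸ hcA.1))
    have hdlt : d < -s := lt_of_le_of_ne hdB.2 (fun h => hns (h ▸ hdB.1))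
    have heS : c + d + s ∈ S := hadd _ (hadd _ hcA.1 _ hdB.1) _ hs
    have he1 : c + d + s < c := by linarith
    have he2 : d < c + d + s := by linarith
    rcases lt_trichotomy (c + d + s) (-s) with h | h | h
    · have : c + d + s ≤ d := le_csSup hBbdd ⟨heS, le_of_lt h⟩
      linarith
    · exact hns (h ▸ heS)
    · have : c ≤ c + d + s := csInf_le hAbdd ⟨heS, le_of_lt h⟩
      linarith
  have h0 : (0 : ℝ) ∈ S := by
    have := hadd a haS (-a) (key a haS)
    simpa using this
  set G : AddSubgroup ℝ :=
    { carrier := S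
      zero_mem' := h0
      add_mem' := fun hx hy => hadd _ hx _ hy
      neg_mem' := fun hx => key _ hx } with hG
  refine ⟨⟨G, rfl⟩, ?_⟩
  rcases G.dense_or_cyclic with h | ⟨x, hx⟩
  · left
    have : closure S = Set.univ := h.closure_eq
    rw [hclosed.closure_eq] at this
    exact this
  · right
    have hSx : S = (AddSubgroup.zmultiples x : Set ℝ) := by
      have : G = AddSubgroup.zmultiples x := by
        rw [hx, AddSubgroup.zmultiples_eq_closure]
      exact congrArg SetLike.coe this
    have hx0 : x ≠ 0 := by
      intro h
      rw [h] at hSx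
      have : a ∈ (AddSubgroup.zmultiples (0 : ℝ) : Set ℝ) := hSx ▸ haS
      rw [AddSubgroup.zmultiples_zero_eq_bot] at this
      simp at this
      linarith
    rcases hx0.lt_or_gt with hlt | hlt
    · refine ⟨-x, by linarith, ?_⟩
      rw [hSx]
      ext y
      constructor
      · rintro ⟨k, rfl⟩; exact ⟨-k, by simp⟩
      · rintro ⟨k, rfl⟩; exact ⟨-k, by simp⟩
    · exact ⟨x, hlt, hSx⟩
end

section
/- Let G be a locally compact group and π, μ, λ unitary representations of G with λ the left regular representation. If λ is weakly contained in the Fock representation F(π) = ⊕_{n≥0} π^{⊗n}, then every unitary representation μ of G with μ weakly contained in λ and π ⊗ μ weakly contained in μ satisfies μ weakly equivalent to λ. -/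
/-- An abstract calculus of (weak equivalence classes of) unitary representations of a
locally compact group `G`, with the weak containment preorder `wc`, tensor products,
countable direct sums, the trivial representation and the left regular representation
`lam`, satisfying the standard compatibility rules (monotonicity of `⊗`, associativity
and unit up to weak equivalence, direct sums, and the Fell absorption principle
`λ ⊗ μ ∼ λ` whenever `μ ≺ λ`). -/
structure WeakContainmentCalculus (G : Type*) [Group G] [TopologicalSpace G]
    [IsTopologicalGroup G] [LocallyCompactSpace G] where
  Rep : Type*
  /-- weak containment `σ ≺ τ` -/
  wc : Rep → Rep → Prop
  wc_refl : ∀ σ, wc σ σ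
  wc_trans : ∀ σ τ ρ, wc σ τ → wc τ ρ → wc σ ρ
  tensor : Rep → Rep → Rep
  tensor_mono : ∀ σ σ' τ τ', wc σ σ' → wc τ τ' → wc (tensor σ τ) (tensor σ' τ')
  tensor_assoc : ∀ σ τ ρ, wc (tensor (tensor σ τ) ρ) (tensor σ (tensor τ ρ)) ∧
    wc (tensor σ (tensor τ ρ)) (tensor (tensor σ τ) ρ)
  triv : Rep
  triv_tensor : ∀ σ, wc (tensor triv σ) σ ∧ wc σ (tensor triv σ)
  dsum : (ℕ → Rep) → Rep
  le_dsum : ∀ (f : ℕ → Rep) (n : ℕ), wc (f n) (dsum f)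
  dsum_le : ∀ (f : ℕ → Rep) (ρ : Rep), (∀ n, wc (f n) ρ) → wc (dsum f) ρ
  tensor_dsum : ∀ (f : ℕ → Rep) (μ : Rep),
    wc (tensor (dsum f) μ) (dsum fun n => tensor (f n) μ) ∧
    wc (dsum fun n => tensor (f n) μ) (tensor (dsum f) μ)
  /-- the left regular representation -/
  lam : Rep
  /-- Fell absorption: `λ ⊗ μ ∼ λ` whenever `μ ≺ λ` -/
  fell : ∀ μ, wc μ lam → wc (tensor lam μ) lam ∧ wc lam (tensor lam μ)

variable {G : Type*} [Group G] [TopologicalSpace G] [IsTopologicalGroup G]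
  [LocallyCompactSpace G]

/-- The `n`-th tensor power `π^{⊗n}` (with `π^{⊗0}` the trivial representation). -/
def WeakContainmentCalculus.tensorPow (C : WeakContainmentCalculus G) (π : C.Rep) :
    ℕ → C.Rep
  | 0 => C.triv
  | n + 1 => C.tensor π (C.tensorPow π n)

/-- The Fock representation `F(π) = ⊕_{n ≥ 0} π^{⊗n}`. -/
def WeakContainmentCalculus.fock (C : WeakContainmentCalculus G) (π : C.Rep) : C.Rep :=
  C.dsum (C.tensorPow π)

/-! Iterating `π ⊗ μ ≺ μ` gives `π^{⊗n} ⊗ μ ≺ μ` for every `n`, hence `F(π) ⊗ μ ≺ μ` since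
tensoring distributes over direct sums. Fell absorption then yields
`λ ≺ λ ⊗ μ ≺ F(π) ⊗ μ ≺ μ`. -/

namespace WeakContainmentCalculus

variable (C : WeakContainmentCalculus G) {π μ : C.Rep}

theorem tensorPow_tensor_wc_of_tensor_wc (hpm : C.wc (C.tensor π μ) μ) (n : ℕ) :
    C.wc (C.tensor (C.tensorPow π n) μ) μ := by
  induction n with
  | zero => exact (C.triv_tensor μ).1
  | succ n ih =>
    have hassoc := (C.tensor_assoc π (C.tensorPow π n) μ).1
    have hstep := C.tensor_mono π π _ μ (C.wc_refl π) ih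
    exact C.wc_trans _ _ _ (C.wc_trans _ _ _ hassoc hstep) hpm

theorem fock_tensor_wc_of_tensor_wc (hpm : C.wc (C.tensor π μ) μ) :
    C.wc (C.tensor (C.fock π) μ) μ :=
  C.wc_trans _ _ _ (C.tensor_dsum (C.tensorPow π) μ).1
    (C.dsum_le _ _ (C.tensorPow_tensor_wc_of_tensor_wc hpm))

theorem lam_wc_of_tensor_wc {σ : C.Rep} (hσ : C.wc C.lam σ) (hmu : C.wc μ C.lam)
    (hσμ : C.wc (C.tensor σ μ) μ) : C.wc C.lam μ :=
  C.wc_trans _ _ _ (C.fell μ hmu).2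
    (C.wc_trans _ _ _ (C.tensor_mono _ _ _ _ hσ (C.wc_refl μ)) hσμ)

end WeakContainmentCalculus

/-- **Weak equivalence with the regular representation.**
Let `G` be a locally compact group and `π, μ, λ` unitary representations of `G`, with
`λ` the left regular representation.  If `λ ≺ F(π)`, then every `μ` with `μ ≺ λ` and
`π ⊗ μ ≺ μ` is weakly equivalent to `λ`. -/
theorem weakly_equivalent_to_regular_of_fock_dominates
    (C : WeakContainmentCalculus G) (π μ : C.Rep)
    (hF : C.wc C.lam (C.fock π))
    (hmu : C.wc μ C.lam)
    (hpm : C.wc (C.tensor π μ) μ) :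
    C.wc μ C.lam ∧ C.wc C.lam μ :=
  ⟨hmu, C.lam_wc_of_tensor_wc hF hmu (C.fock_tensor_wc_of_tensor_wc hpm)⟩
end
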